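/- Under the combined setting: 𝒲 symmetric positive definite (r+s)×(r+s), Π ∈ ℝ^{(r+s)×p} full column rank with Γ = SᵀΠ where S = (I_r,0)ᵀ, Φ ∈ ℝ^{k×p} full row rank, Σᴿ = (Πᵀ𝒲⁻¹Π)⁻¹, 𝒞ᴿ = Σᴿ - ΣᴿΦᵀ(ΦΣᴿΦᵀ)⁻¹ΦΣᴿ, 𝒫ᴿ = 𝒲⁻¹ - 𝒲⁻¹Π𝒞ᴿΠᵀ𝒲⁻¹, W = Sᵀ𝒲S (assumed positive definite), Σ = (ΓᵀW⁻¹Γ)⁻¹ (Γ full column rank), and 𝒫 = W⁻¹ - W⁻¹ΓΣΓᵀW⁻¹. Then trace(𝒲 (𝒫ᴿ - S 𝒫 Sᵀ)) = s + k. -/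

import Mathlib

/-!
For invertible `M`, `M (M⁻¹ - M⁻¹ A C B M⁻¹) = 1 - A C B M⁻¹`, so by cyclicity its trace is
`card - tr (C (B M⁻¹ A))`, and this is a difference of sizes when `C = (B M⁻¹ A)⁻¹`.
With `𝒲, Π` this gives `tr (𝒲 𝒫ᴿ) = (r + s) - tr (𝒞ᴿ Σᴿ⁻¹)`; by cyclicity `tr (𝒞ᴿ Σᴿ⁻¹)` is again
of this shape with `Σᴿ⁻¹, Φᵀ`, hence equals `p - k`. Cyclicity also turns `tr (𝒲 S 𝒫 Sᵀ)` into
`tr (W 𝒫) = r - p`. Full rank of `Π, Φᵀ, Γ` makes the Gram matrices positive definite, hence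
invertible.
-/

open Matrix

namespace Matrix

variable {m n : Type*} [Fintype n]

theorem mulVec_injective_of_rank_eq_card {K : Type*} [Field K] {A : Matrix m n K}
    (hA : A.rank = Fintype.card n) : Function.Injective A.mulVec := by
  have h := A.mulVecLin.finrank_range_add_finrank_ker
  rw [Matrix.rank] at hA
  rw [hA, Module.finrank_fintype_fun_eq_card] at h
  have hker : Module.finrank K (LinearMap.ker A.mulVecLin) = 0 := by omega
  exact LinearMap.ker_eq_bot.mp (Submodule.finrank_eq_zero.mp hker)

variable [Fintype m]

theorem PosDef.transpose_mul_mul_of_rank_eq_card [DecidableEq n] {K : Type*} [Field K]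
    [PartialOrder K] [StarRing K] [TrivialStar K] {A : Matrix m m K} (hA : A.PosDef)
    {B : Matrix m n K} (hB : B.rank = Fintype.card n) : (Bᵀ * A * B).PosDef := by
  simpa using hA.conjTranspose_mul_mul_same (mulVec_injective_of_rank_eq_card hB)

variable {R : Type*} [CommRing R] [DecidableEq m]

theorem trace_mul_sub_inv_mul_mul_mul_inv {M : Matrix m m R} (hM : IsUnit M.det)
    (A : Matrix m n R) (C : Matrix n n R) (B : Matrix n m R) :
    (M * (M⁻¹ - M⁻¹ * A * C * B * M⁻¹)).trace =
      Fintype.card m - (C * (B * M⁻¹ * A)).trace := by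
  have hMM : M * M⁻¹ = 1 := mul_nonsing_inv M hM
  have hproj : M * (M⁻¹ - M⁻¹ * A * C * B * M⁻¹) = 1 - A * (C * B * M⁻¹) := by
    simp only [Matrix.mul_sub, hMM, ← Matrix.mul_assoc, Matrix.one_mul]
  rw [hproj, trace_sub, trace_one, trace_mul_comm]
  simp only [Matrix.mul_assoc]

theorem trace_mul_sub_inv_mul_inv_mul_mul_inv [DecidableEq n] {M : Matrix m m R}
    (hM : IsUnit M.det) (A : Matrix m n R) (B : Matrix n m R) (hBA : IsUnit (B * M⁻¹ * A).det) :
    (M * (M⁻¹ - M⁻¹ * A * (B * M⁻¹ * A)⁻¹ * B * M⁻¹)).trace =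
      Fintype.card m - Fintype.card n := by
  rw [trace_mul_sub_inv_mul_mul_mul_inv hM, nonsing_inv_mul _ hBA, trace_one]

end Matrix

theorem stmt_11 (r s p k : ℕ)
    (𝒲 : Matrix (Fin (r + s)) (Fin (r + s)) ℝ) (h𝒲 : 𝒲.PosDef)
    (Pim : Matrix (Fin (r + s)) (Fin p) ℝ) (hPim : Pim.rank = p)
    (Φ : Matrix (Fin k) (Fin p) ℝ) (hΦ : Φ.rank = k) :
    let S : Matrix (Fin (r + s)) (Fin r) ℝ :=
      Matrix.of fun i j => if (i : ℕ) = (j : ℕ) then (1 : ℝ) else 0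
    let Γ : Matrix (Fin r) (Fin p) ℝ := Sᵀ * Pim
    let SR : Matrix (Fin p) (Fin p) ℝ := (Pimᵀ * 𝒲⁻¹ * Pim)⁻¹
    let CR : Matrix (Fin p) (Fin p) ℝ := SR - SR * Φᵀ * (Φ * SR * Φᵀ)⁻¹ * Φ * SR
    let PR : Matrix (Fin (r + s)) (Fin (r + s)) ℝ := 𝒲⁻¹ - 𝒲⁻¹ * Pim * CR * Pimᵀ * 𝒲⁻¹
    let W : Matrix (Fin r) (Fin r) ℝ := Sᵀ * 𝒲 * S
    W.PosDef → Γ.rank = p →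
      let Sg : Matrix (Fin p) (Fin p) ℝ := (Γᵀ * W⁻¹ * Γ)⁻¹
      let P : Matrix (Fin r) (Fin r) ℝ := W⁻¹ - W⁻¹ * Γ * Sg * Γᵀ * W⁻¹
      (𝒲 * (PR - S * P * Sᵀ)).trace = (s : ℝ) + (k : ℝ) := by
  intro S Γ SR CR PR W hW hΓ Sg P
  have hG : (Pimᵀ * 𝒲⁻¹ * Pim).PosDef :=
    h𝒲.inv.transpose_mul_mul_of_rank_eq_card (by simpa using hPim)
  have hH : (Φ * SR * Φᵀ).PosDef := by
    simpa using
      hG.inv.transpose_mul_mul_of_rank_eq_card (B := Φᵀ) (by simpa [rank_transpose] using hΦ)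
  have hGΓ : (Γᵀ * W⁻¹ * Γ).PosDef :=
    hW.inv.transpose_mul_mul_of_rank_eq_card (by simpa using hΓ)
  have hPR : (𝒲 * PR).trace = (r + s : ℕ) - ((p : ℝ) - k) := by
    rw [trace_mul_sub_inv_mul_mul_mul_inv h𝒲.det_pos.ne'.isUnit, trace_mul_comm,
      trace_mul_sub_inv_mul_inv_mul_mul_inv hG.det_pos.ne'.isUnit _ _ hH.det_pos.ne'.isUnit]
    simp
  have hP : (𝒲 * (S * P * Sᵀ)).trace = r - p := by
    rw [← Matrix.mul_assoc, trace_mul_comm, ← Matrix.mul_assoc, ← Matrix.mul_assoc,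
      trace_mul_sub_inv_mul_inv_mul_mul_inv hW.det_pos.ne'.isUnit _ _ hGΓ.det_pos.ne'.isUnit]
    simp
  rw [Matrix.mul_sub, trace_sub, hPR, hP]
  push_cast
  ring
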